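/- Let N ≥ 2, let G = (g_1,…,g_N) be a K-dual of F = (f_1,…,f_N), and suppose: (i) each ⟨g_i, f_i⟩ is a nonnegative real number, and (ii) there is a real constant c ≥ 0 with ⟨g_i, f_j⟩⟨g_j, f_i⟩ = c for all i ≠ j. Set r₁ = max_{1≤i≤N} ⟨g_i, f_i⟩, Δ = { i : ⟨g_i, f_i⟩ = r₁ }, and r₂ = max_{i≠j} ρ(T_{ij}), where T_{ij} f = ⟨f, g_i⟩ f_i + ⟨f, g_j⟩ f_j and ρ denotes the spectral radius. Then: if c > 0 and Δ has exactly one element, r₂ = (1/2)( r₁ + m + √( (r₁ − m)² + 4c ) ), where m = max_{i ∉ Δ} ⟨g_i, f_i⟩; if c > 0 and Δ has more than one element, r₂ = r₁ + √c; and if c = 0, r₂ = r₁. -/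

import Mathlib

local notation "⟪" x ", " y "⟫" => @inner ℂ _ _ x y

/-- The spectral radius of an operator `T` on a finite-dimensional complex inner product
space: the maximum of `|λ|` over the spectrum of `T` over `ℂ`. -/
noncomputable def specRad {H : Type*} [NormedAddCommGroup H] [InnerProductSpace ℂ H]
    (T : H →L[ℂ] H) : ℝ :=
  ⨆ lam ∈ spectrum ℂ T, ‖lam‖

/-- The two-erasure error operator `T_{ij} f = ⟨f, g_i⟩ f_i + ⟨f, g_j⟩ f_j`
(the paper's `⟨f, g⟩` is linear in the first slot, i.e. Mathlib's `⟪g, f⟫`). -/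
noncomputable def erasureOp {H : Type*} [NormedAddCommGroup H] [InnerProductSpace ℂ H]
    (fi fj gi gj : H) : H →L[ℂ] H :=
  (innerSL ℂ gi).smulRight fi + (innerSL ℂ gj).smulRight fj

/-!
`T_{ij}` factors through `ℂ²` as `f ↦ (⟨f, g_i⟩, ⟨f, g_j⟩) ↦ x f_i + y f_j`, so its nonzero
eigenvalues are those of the `2 × 2` matrix `(⟨f_l, g_k⟩)_{k,l ∈ {i,j}}`, i.e. the roots of
`(μ - a_i)(μ - a_j) = c` with `a_i = ⟨g_i, f_i⟩`. Since `a_i, a_j, c ≥ 0`, the larger root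
`φ(a_i, a_j)` dominates the modulus of the other one, so `ρ(T_{ij}) = φ(a_i, a_j)`. As `φ` is
symmetric and increasing in each argument, `max_{i ≠ j} φ(a_i, a_j)` is attained by pairing a
maximizer of `a` with a maximizer of `a` over the remaining indices, which gives the three cases.
-/

/-- The larger root of `(x - a) * (x - b) = c`. -/
noncomputable def perronRoot (a b c : ℝ) : ℝ :=
  (a + b + √((a - b) ^ 2 + 4 * c)) / 2

section perronRoot

variable {a a' b c : ℝ}

lemma perronRoot_comm (a b c : ℝ) : perronRoot a b c = perronRoot b a c := by
  rw [perronRoot, perronRoot, add_comm a b, ← neg_sub b a, neg_sq]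

lemma perronRoot_self (a c : ℝ) : perronRoot a a c = a + √c := by
  rw [perronRoot, show (a - a) ^ 2 + 4 * c = 2 ^ 2 * c by ring, Real.sqrt_mul (by positivity),
    Real.sqrt_sq zero_le_two]
  ring

lemma perronRoot_zero (a b : ℝ) : perronRoot a b 0 = max a b := by
  rw [perronRoot, mul_zero, add_zero, Real.sqrt_sq_eq_abs]
  rcases le_total a b with h | h
  · rw [abs_of_nonpos (sub_nonpos.2 h), max_eq_right h]; ring
  · rw [abs_of_nonneg (sub_nonneg.2 h), max_eq_left h]; ring

lemma perronRoot_mono_left (hc : 0 ≤ c) (h : a ≤ a') :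
    perronRoot a b c ≤ perronRoot a' b c := by
  set s' := √((a' - b) ^ 2 + 4 * c)
  have hs' : |a' - b| ≤ s' := Real.abs_le_sqrt (by linarith)
  have hs'sq : s' ^ 2 = (a' - b) ^ 2 + 4 * c := Real.sq_sqrt (by positivity)
  have hu : 0 ≤ s' + (a' - b) := neg_le_iff_add_nonneg.1 ((neg_le_abs (a' - b)).trans hs')
  have : √((a - b) ^ 2 + 4 * c) ≤ (a' - a) + s' := by
    rw [Real.sqrt_le_iff]
    constructor
    · linarith [(abs_nonneg _).trans hs']
    · nlinarith [mul_nonneg (sub_nonneg.2 h) hu]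
  unfold perronRoot
  linarith

lemma abs_add_sub_perronRoot_le (hab : 0 ≤ a + b) :
    |a + b - perronRoot a b c| ≤ perronRoot a b c := by
  have := Real.sqrt_nonneg ((a - b) ^ 2 + 4 * c)
  unfold perronRoot
  rw [abs_le]
  constructor <;> linarith

lemma sub_mul_sub_eq_iff_eq_perronRoot (hc : 0 ≤ c) (μ : ℂ) :
    (μ - a) * (μ - b) = c ↔
      μ = perronRoot a b c ∨ μ = ((a + b - perronRoot a b c : ℝ) : ℂ) := by
  have hs : ((√((a - b) ^ 2 + 4 * c) : ℝ) : ℂ) ^ 2 = (a - b) ^ 2 + 4 * c := by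
    exact_mod_cast Real.sq_sqrt (by positivity : 0 ≤ (a - b) ^ 2 + 4 * c)
  rw [← sub_eq_zero, ← sub_eq_zero (a := μ), ← sub_eq_zero (a := μ), ← mul_eq_zero]
  unfold perronRoot
  push_cast
  constructor <;> intro h
  · linear_combination h - (1 / 4 : ℂ) * hs
  · linear_combination h + (1 / 4 : ℂ) * hs

end perronRoot

lemma specRad_eq_of_forall_norm_le {H : Type*} [NormedAddCommGroup H] [InnerProductSpace ℂ H]
    {T : H →L[ℂ] H} {r : ℝ} (hr : 0 ≤ r) (hle : ∀ μ ∈ spectrum ℂ T, ‖μ‖ ≤ r)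
    (hmem : r ≠ 0 → (r : ℂ) ∈ spectrum ℂ T) : specRad T = r := by
  -- `⨆` over a false proposition is `0` in `ℝ`, so `specRad T ≥ 0` even for an empty spectrum.
  have hle' : ∀ μ : ℂ, ⨆ _ : μ ∈ spectrum ℂ T, ‖μ‖ ≤ r :=
    fun μ ↦ Real.iSup_le (hle μ) hr
  refine le_antisymm (Real.iSup_le hle' hr) ?_
  rcases eq_or_ne r 0 with rfl | hr0
  · exact Real.iSup_nonneg fun μ ↦ Real.iSup_nonneg fun _ ↦ norm_nonneg μ
  · calc r = ⨆ _ : (r : ℂ) ∈ spectrum ℂ T, ‖(r : ℂ)‖ := by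
          rw [ciSup_pos (hmem hr0), Complex.norm_real, Real.norm_of_nonneg hr]
      _ ≤ specRad T := le_ciSup ⟨r, Set.forall_mem_range.2 hle'⟩ (r : ℂ)

lemma mem_spectrum_iff_exists_apply_eq_smul {𝕜 E : Type*} [NontriviallyNormedField 𝕜]
    [CompleteSpace 𝕜] [NormedAddCommGroup E] [NormedSpace 𝕜 E] [FiniteDimensional 𝕜 E]
    {T : E →L[𝕜] E} {μ : 𝕜} : μ ∈ spectrum 𝕜 T ↔ ∃ v ≠ 0, T v = μ • v := by
  have := FiniteDimensional.complete 𝕜 E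
  rw [ContinuousLinearMap.spectrum_eq, ← Module.End.hasEigenvalue_iff_mem_spectrum,
    Module.End.hasEigenvalue_iff, Submodule.ne_bot_iff]
  simp only [Module.End.mem_eigenspace_iff, ContinuousLinearMap.coe_coe]
  exact exists_congr fun v ↦ and_comm

section erasureOp

variable {H : Type*} [NormedAddCommGroup H] [InnerProductSpace ℂ H] {fi fj gi gj : H}

lemma erasureOp_apply (v : H) : erasureOp fi fj gi gj v = ⟪gi, v⟫ • fi + ⟪gj, v⟫ • fj := by
  simp [erasureOp]

lemma sub_mul_sub_eq_of_erasureOp_apply_eq_smul {μ : ℂ} {v : H} (hμ : μ ≠ 0) (hv : v ≠ 0)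
    (h : erasureOp fi fj gi gj v = μ • v) :
    (μ - ⟪gi, fi⟫) * (μ - ⟪gj, fj⟫) = ⟪gi, fj⟫ * ⟪gj, fi⟫ := by
  rw [erasureOp_apply] at h
  set x := ⟪gi, v⟫
  set y := ⟪gj, v⟫
  have hx : (μ - ⟪gi, fi⟫) * x = ⟪gi, fj⟫ * y := by
    have := congrArg (⟪gi, ·⟫) h
    simp only [inner_add_right, inner_smul_right] at this
    linear_combination -this
  have hy : (μ - ⟪gj, fj⟫) * y = ⟪gj, fi⟫ * x := by
    have := congrArg (⟪gj, ·⟫) h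
    simp only [inner_add_right, inner_smul_right] at this
    linear_combination -this
  have hxy : x ≠ 0 ∨ y ≠ 0 := by
    by_contra! h0
    rw [h0.1, h0.2, zero_smul, zero_smul, add_zero, eq_comm, smul_eq_zero] at h
    exact h.elim hμ hv
  rw [← sub_eq_zero]
  rcases hxy with hx0 | hy0
  · refine (mul_eq_zero.1 ?_).resolve_right hx0
    linear_combination (μ - ⟪gj, fj⟫) * hx + ⟪gi, fj⟫ * hy
  · refine (mul_eq_zero.1 ?_).resolve_right hy0
    linear_combination (μ - ⟪gi, fi⟫) * hy + ⟪gj, fi⟫ * hx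

lemma exists_erasureOp_apply_eq_smul {μ : ℂ} (hμ : μ ≠ 0)
    (h : (μ - ⟪gi, fi⟫) * (μ - ⟪gj, fj⟫) = ⟪gi, fj⟫ * ⟪gj, fi⟫) :
    ∃ v ≠ 0, erasureOp fi fj gi gj v = μ • v := by
  -- `w₁`, `w₂` come from the two columns of the adjugate of `μ - (⟪g_k, f_l⟫)`; if both vanish,
  -- then `⟪gj, fi⟫ = 0` and `μ = ⟪gi, fi⟫`, so `fi` itself is an eigenvector.
  set w₁ := ⟪gi, fj⟫ • fi + (μ - ⟪gi, fi⟫) • fj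
  set w₂ := (μ - ⟪gj, fj⟫) • fi + ⟪gj, fi⟫ • fj
  have hi₁ : ⟪gi, w₁⟫ = μ * ⟪gi, fj⟫ := by
    simp only [w₁, inner_add_right, inner_smul_right]; ring
  have hj₁ : ⟪gj, w₁⟫ = μ * (μ - ⟪gi, fi⟫) := by
    simp only [w₁, inner_add_right, inner_smul_right]; linear_combination -h
  have hi₂ : ⟪gi, w₂⟫ = μ * (μ - ⟪gj, fj⟫) := by
    simp only [w₂, inner_add_right, inner_smul_right]; linear_combination -h
  have hj₂ : ⟪gj, w₂⟫ = μ * ⟪gj, fi⟫ := by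
    simp only [w₂, inner_add_right, inner_smul_right]; ring
  by_cases h₁ : w₁ = 0
  · by_cases h₂ : w₂ = 0
    · have hμa : μ = ⟪gi, fi⟫ := by
        rw [h₁, inner_zero_right, eq_comm, mul_eq_zero] at hj₁
        exact sub_eq_zero.1 (hj₁.resolve_left hμ)
      have hq : ⟪gj, fi⟫ = 0 := by
        rw [h₂, inner_zero_right, eq_comm, mul_eq_zero] at hj₂
        exact hj₂.resolve_left hμ
      refine ⟨fi, ?_, ?_⟩
      · rintro rfl
        exact hμ (hμa.trans (inner_zero_right _))
      · rw [erasureOp_apply, ← hμa, hq, zero_smul, add_zero]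
    · refine ⟨w₂, h₂, ?_⟩
      rw [erasureOp_apply, hi₂, hj₂, smul_add, mul_smul, mul_smul]
  · refine ⟨w₁, h₁, ?_⟩
    rw [erasureOp_apply, hi₁, hj₁, smul_add, mul_smul, mul_smul]

variable [FiniteDimensional ℂ H]

lemma mem_spectrum_erasureOp_iff {μ : ℂ} (hμ : μ ≠ 0) :
    μ ∈ spectrum ℂ (erasureOp fi fj gi gj) ↔
      (μ - ⟪gi, fi⟫) * (μ - ⟪gj, fj⟫) = ⟪gi, fj⟫ * ⟪gj, fi⟫ := by
  rw [mem_spectrum_iff_exists_apply_eq_smul]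
  exact ⟨fun ⟨_, hv, h⟩ ↦ sub_mul_sub_eq_of_erasureOp_apply_eq_smul hμ hv h,
    exists_erasureOp_apply_eq_smul hμ⟩

lemma specRad_erasureOp {a b c : ℝ} (ha0 : 0 ≤ a) (hb0 : 0 ≤ b) (hc : 0 ≤ c)
    (ha : ⟪gi, fi⟫ = a) (hb : ⟪gj, fj⟫ = b) (hpq : ⟪gi, fj⟫ * ⟪gj, fi⟫ = c) :
    specRad (erasureOp fi fj gi gj) = perronRoot a b c := by
  have hab : 0 ≤ a + b := add_nonneg ha0 hb0
  have hr : 0 ≤ perronRoot a b c := (abs_nonneg _).trans (abs_add_sub_perronRoot_le hab)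
  refine specRad_eq_of_forall_norm_le hr (fun μ hμ ↦ ?_) fun hr0 ↦ ?_
  · rcases eq_or_ne μ 0 with rfl | hμ0
    · rwa [norm_zero]
    rw [mem_spectrum_erasureOp_iff hμ0, ha, hb, hpq, sub_mul_sub_eq_iff_eq_perronRoot hc] at hμ
    rcases hμ with rfl | rfl <;> rw [Complex.norm_real, Real.norm_eq_abs]
    · exact (abs_of_nonneg hr).le
    · exact abs_add_sub_perronRoot_le hab
  · rw [mem_spectrum_erasureOp_iff (Complex.ofReal_ne_zero.2 hr0), ha, hb, hpq,
      sub_mul_sub_eq_iff_eq_perronRoot hc]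
    exact Or.inl rfl

end erasureOp

lemma ciSup_ne_eq_of_top_two {ι : Type*} [Finite ι] (A : ι → ℝ) (φ : ℝ → ℝ → ℝ)
    (hcomm : ∀ a b, φ a b = φ b a) (hmono : ∀ {a a'} b, a ≤ a' → φ a b ≤ φ a' b)
    {k l : ι} (hkl : k ≠ l) (hk : ∀ i, A i ≤ A k) (hl : ∀ i ≠ k, A i ≤ A l) :
    ⨆ p : {p : ι × ι // p.1 ≠ p.2}, φ (A p.1.1) (A p.1.2) = φ (A k) (A l) := by
  have key : ∀ i j, j ≠ k → φ (A i) (A j) ≤ φ (A k) (A l) := fun i j hj ↦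
    calc φ (A i) (A j) ≤ φ (A k) (A j) := hmono _ (hk i)
      _ = φ (A j) (A k) := hcomm _ _
      _ ≤ φ (A l) (A k) := hmono _ (hl j hj)
      _ = φ (A k) (A l) := hcomm _ _
  have : Nonempty {p : ι × ι // p.1 ≠ p.2} := ⟨⟨(k, l), hkl⟩⟩
  refine le_antisymm (ciSup_le fun ⟨(i, j), hij⟩ ↦ ?_) ?_
  · rcases eq_or_ne j k with rfl | hj
    · exact hcomm _ _ ▸ key j i hij
    · exact key i j hj
  · exact le_ciSup (f := fun p : {p : ι × ι // p.1 ≠ p.2} ↦ φ (A p.1.1) (A p.1.2))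
      (Set.finite_range _).bddAbove ⟨(k, l), hkl⟩

lemma specRad_erasureOp_eq_perronRoot {ι H : Type*} [NormedAddCommGroup H]
    [InnerProductSpace ℂ H] [FiniteDimensional ℂ H] {F G : ι → H} {c : ℝ}
    (hpos : ∀ i, (⟪F i, G i⟫).im = 0 ∧ 0 ≤ (⟪F i, G i⟫).re) (hc : 0 ≤ c)
    (huni : ∀ i j, i ≠ j → ⟪F j, G i⟫ * ⟪F i, G j⟫ = (c : ℂ)) {i j : ι} (hij : i ≠ j) :
    specRad (erasureOp (F i) (F j) (G i) (G j))
      = perronRoot (⟪F i, G i⟫).re (⟪F j, G j⟫).re c := by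
  have hGF (i : ι) : ⟪G i, F i⟫ = (⟪F i, G i⟫).re := by
    have hFG : ⟪F i, G i⟫ = (⟪F i, G i⟫).re := Complex.ext rfl (by simpa using (hpos i).1)
    rw [← inner_conj_symm, hFG, Complex.conj_ofReal, Complex.ofReal_re]
  have hcross : ⟪G i, F j⟫ * ⟪G j, F i⟫ = c := by
    simpa only [map_mul, inner_conj_symm, Complex.conj_ofReal] using
      congrArg (starRingEnd ℂ) (huni i j hij)
  exact specRad_erasureOp (hpos i).2 (hpos j).2 hc (hGF i) (hGF j) hcross

lemma ciSup_eq_of_forall_le {ι : Type*} [Finite ι] {A : ι → ℝ} {k : ι} (hk : ∀ i, A i ≤ A k) :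
    ⨆ i, A i = A k :=
  have : Nonempty ι := ⟨k⟩
  le_antisymm (ciSup_le hk) (le_ciSup (Set.finite_range A).bddAbove k)

lemma exists_ne_forall_ne_le {ι β : Type*} [Finite ι] [Nontrivial ι] [LinearOrder β]
    (A : ι → β) (k : ι) : ∃ l ≠ k, ∀ i ≠ k, A i ≤ A l := by
  obtain ⟨j, hj⟩ := exists_ne k
  have : Nonempty {i // i ≠ k} := ⟨⟨j, hj⟩⟩
  obtain ⟨l, hl⟩ := Finite.exists_max fun i : {i // i ≠ k} ↦ A i
  exact ⟨l, l.2, fun i hi ↦ hl ⟨i, hi⟩⟩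

theorem stmt17_general
    {H : Type*} [NormedAddCommGroup H] [InnerProductSpace ℂ H] [FiniteDimensional ℂ H]
    {N : ℕ} (hN : 2 ≤ N)
    (F G : Fin N → H)
    (hpos : ∀ i, (⟪F i, G i⟫).im = 0 ∧ 0 ≤ (⟪F i, G i⟫).re)
    (c : ℝ) (hc : 0 ≤ c)
    (huni : ∀ i j, i ≠ j → ⟪F j, G i⟫ * ⟪F i, G j⟫ = (c : ℂ))
    (r₁ : ℝ) (hr₁ : r₁ = ⨆ i, (⟪F i, G i⟫).re)
    (m : ℝ) (hm : m = ⨆ i : {i : Fin N // (⟪F i, G i⟫).re ≠ r₁}, (⟪F i.1, G i.1⟫).re)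
    (r₂ : ℝ) (hr₂ : r₂ = ⨆ p : {p : Fin N × Fin N // p.1 ≠ p.2},
      specRad (erasureOp (F p.1.1) (F p.1.2) (G p.1.1) (G p.1.2))) :
    (0 < c → (∃! k : Fin N, (⟪F k, G k⟫).re = r₁) →
      r₂ = (r₁ + m + Real.sqrt ((r₁ - m) ^ 2 + 4 * c)) / 2) ∧
    (0 < c → (∃ k l : Fin N, k ≠ l ∧ (⟪F k, G k⟫).re = r₁ ∧ (⟪F l, G l⟫).re = r₁) →
      r₂ = r₁ + Real.sqrt c) ∧
    (c = 0 → r₂ = r₁) := by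
  have : Nontrivial (Fin N) := Fin.nontrivial_iff_two_le.2 hN
  set A : Fin N → ℝ := fun i ↦ (⟪F i, G i⟫).re
  have hr₂_eq {k l : Fin N} (hkl : k ≠ l) (hk : ∀ i, A i ≤ A k) (hl : ∀ i ≠ k, A i ≤ A l) :
      r₂ = perronRoot (A k) (A l) c := by
    rw [hr₂, iSup_congr fun p ↦ specRad_erasureOp_eq_perronRoot hpos hc huni p.2]
    exact ciSup_ne_eq_of_top_two A (perronRoot · · c) (fun _ _ ↦ perronRoot_comm _ _ _)
      (fun _ ↦ perronRoot_mono_left hc) hkl hk hl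
  obtain ⟨k, hk⟩ := Finite.exists_max A
  have hkr : r₁ = A k := hr₁.trans (ciSup_eq_of_forall_le hk)
  have hmax {j : Fin N} (hj : A j = r₁) (i : Fin N) : A i ≤ A j :=
    (hk i).trans (hkr.symm.trans hj.symm).le
  refine ⟨?_, ?_, fun hc0 ↦ ?_⟩
  · rintro - ⟨k₀, hk₀ : A k₀ = r₁, huniq⟩
    obtain ⟨l, hlk₀, hl⟩ := exists_ne_forall_ne_le A k₀
    have hne {i : Fin N} (hi : i ≠ k₀) : A i ≠ r₁ := fun h ↦ hi (huniq i h)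
    have hml : m = A l := hm.trans <|
      ciSup_eq_of_forall_le (k := (⟨l, hne hlk₀⟩ : {i // A i ≠ r₁})) fun i ↦
        hl i fun h ↦ i.2 (h ▸ hk₀)
    rw [hr₂_eq hlk₀.symm (hmax hk₀) hl, hk₀, hml, perronRoot]
  · rintro - ⟨k₁, l₁, hkl, hk₁ : A k₁ = r₁, hl₁ : A l₁ = r₁⟩
    rw [hr₂_eq hkl (hmax hk₁) fun i _ ↦ hmax hl₁ i, hk₁, hl₁, perronRoot_self]
  · obtain ⟨l, hlk, hl⟩ := exists_ne_forall_ne_le A k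
    rw [hr₂_eq hlk.symm hk hl, hc0, perronRoot_zero, max_eq_left (hk l), hkr]

/-- Let `N ≥ 2` and `G` a `K`-dual of `F` with each `⟨g_i, f_i⟩` a nonnegative
real and `⟨g_i, f_j⟩⟨g_j, f_i⟩ = c ≥ 0` for all `i ≠ j`.  With
`r₁ = max_i ⟨g_i, f_i⟩`, `Δ` the set of maximizing indices,
`m = max_{i ∉ Δ} ⟨g_i, f_i⟩` and `r₂ = max_{i≠j} ρ(T_{ij})`:
if `c > 0` and `Δ` is a singleton then `r₂ = (r₁ + m + √((r₁ − m)² + 4c))/2`;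
if `c > 0` and `Δ` has more than one element then `r₂ = r₁ + √c`;
and if `c = 0` then `r₂ = r₁`. -/
theorem stmt17
    {H : Type*} [NormedAddCommGroup H] [InnerProductSpace ℂ H] [FiniteDimensional ℂ H]
    (hdim : 1 ≤ Module.finrank ℂ H)
    {N : ℕ} (hN : 2 ≤ N)
    (K : H →L[ℂ] H)
    (F G : Fin N → H)
    (hdual : ∀ f : H, K f = ∑ i, ⟪G i, f⟫ • F i)
    (hpos : ∀ i, (⟪F i, G i⟫).im = 0 ∧ 0 ≤ (⟪F i, G i⟫).re)
    (c : ℝ) (hc : 0 ≤ c)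
    (huni : ∀ i j, i ≠ j → ⟪F j, G i⟫ * ⟪F i, G j⟫ = (c : ℂ))
    (r₁ : ℝ) (hr₁ : r₁ = ⨆ i, (⟪F i, G i⟫).re)
    (m : ℝ) (hm : m = ⨆ i : {i : Fin N // (⟪F i, G i⟫).re ≠ r₁}, (⟪F i.1, G i.1⟫).re)
    (r₂ : ℝ) (hr₂ : r₂ = ⨆ p : {p : Fin N × Fin N // p.1 ≠ p.2},
      specRad (erasureOp (F p.1.1) (F p.1.2) (G p.1.1) (G p.1.2))) :
    (0 < c → (∃! k : Fin N, (⟪F k, G k⟫).re = r₁) →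
      r₂ = (r₁ + m + Real.sqrt ((r₁ - m) ^ 2 + 4 * c)) / 2) ∧
    (0 < c → (∃ k l : Fin N, k ≠ l ∧ (⟪F k, G k⟫).re = r₁ ∧ (⟪F l, G l⟫).re = r₁) →
      r₂ = r₁ + Real.sqrt c) ∧
    (c = 0 → r₂ = r₁) :=
  stmt17_general hN F G hpos c hc huni r₁ hr₁ m hm r₂ hr₂
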